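/- There exists a 7-dimensional complex nilpotent Lie algebra which is characteristically nilpotent, i.e., all of whose derivations are nilpotent linear endomorphisms. -/

import Mathlib

noncomputable section

def L7 : Type := Fin 7 → ℂ

namespace L7
instance : AddCommGroup L7 := Pi.addCommGroup
instance : Module ℂ L7 := Pi.module _ _ _

def e (i : Fin 7) : L7 := fun j => if j = i then 1 else 0

@[simp] lemma e_apply (i j : Fin 7) : e i j = if j = i then 1 else 0 := rfl

def br (x y : L7) : L7 := fun k =>
  if k = 2 then x 0 * y 1 - x 1 * y 0
  else if k = 3 then x 0 * y 2 - x 2 * y 0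
  else if k = 4 then x 0 * y 3 - x 3 * y 0 + (x 1 * y 2 - x 2 * y 1)
  else if k = 5 then x 0 * y 4 - x 4 * y 0 + (x 1 * y 2 - x 2 * y 1) + (x 1 * y 3 - x 3 * y 1)
  else if k = 6 then x 0 * y 5 - x 5 * y 0 + (x 1 * y 3 - x 3 * y 1) + (x 1 * y 4 - x 4 * y 1)
  else 0

@[simp] lemma add_apply (x y : L7) (i : Fin 7) : (x + y) i = x i + y i := rfl
@[simp] lemma smul_apply (c : ℂ) (x : L7) (i : Fin 7) : (c • x) i = c * x i := rfl
@[simp] lemma zero_apply (i : Fin 7) : (0 : L7) i = 0 := rfl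

instance : LieRing L7 where
  bracket := br
  add_lie x y z := by funext k; fin_cases k <;> simp [br] <;> ring
  lie_add x y z := by funext k; fin_cases k <;> simp [br] <;> ring
  lie_self x := by funext k; fin_cases k <;> simp [br] <;> ring
  leibniz_lie x y z := by funext k; fin_cases k <;> simp [br] <;> ring

@[simp] lemma lie_def (x y : L7) : ⁅x, y⁆ = br x y := rfl

instance : LieAlgebra ℂ L7 where
  lie_smul c x y := by funext k; fin_cases k <;> simp [br] <;> ring

def iso : (Fin 7 → ℂ) ≃ₗ[ℂ] L7 :=
  { toFun := fun x => x, invFun := fun x => x, map_add' := fun _ _ => rfl,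
    map_smul' := fun _ _ => rfl, left_inv := fun _ => rfl, right_inv := fun _ => rfl }

instance : Module.Finite ℂ L7 := Module.Finite.equiv iso

lemma finrank_eq : Module.finrank ℂ L7 = 7 := by
  rw [← iso.finrank_eq]; simp

lemma br2 (x y : L7) (h0 : y 0 = 0) (h1 : y 1 = 0) : br x y 2 = 0 := by
  simp [br, h0, h1]

lemma br3 (x y : L7) (h0 : y 0 = 0) (h1 : y 1 = 0) (h2 : y 2 = 0) : br x y 3 = 0 := by
  simp [br, h0, h1, h2]

lemma br4 (x y : L7) (h0 : y 0 = 0) (h1 : y 1 = 0) (h2 : y 2 = 0) (h3 : y 3 = 0) : br x y 4 = 0 := by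
  simp [br, h0, h1, h2, h3]

lemma br5 (x y : L7) (h0 : y 0 = 0) (h1 : y 1 = 0) (h2 : y 2 = 0) (h3 : y 3 = 0) (h4 : y 4 = 0) : br x y 5 = 0 := by
  simp [br, h0, h1, h2, h3, h4]

lemma br6 (x y : L7) (h0 : y 0 = 0) (h1 : y 1 = 0) (h2 : y 2 = 0) (h3 : y 3 = 0) (h4 : y 4 = 0) (h5 : y 5 = 0) : br x y 6 = 0 := by
  simp [br, h0, h1, h2, h3, h4, h5]

lemma br_pow6 (x y : L7) : br x (br x (br x (br x (br x (br x y))))) = 0 := by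
  set z1 : L7 := br x y with hz1
  have q10 : z1 0 = 0 := by simp [hz1, br]
  have q11 : z1 1 = 0 := by simp [hz1, br]
  set z2 : L7 := br x z1 with hz2
  have q20 : z2 0 = 0 := by simp [hz2, br]
  have q21 : z2 1 = 0 := by simp [hz2, br]
  have q22 : z2 2 = 0 := by rw [hz2]; exact br2 x z1 q10 q11
  set z3 : L7 := br x z2 with hz3
  have q30 : z3 0 = 0 := by simp [hz3, br]
  have q31 : z3 1 = 0 := by simp [hz3, br]
  have q32 : z3 2 = 0 := by rw [hz3]; exact br2 x z2 q20 q21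
  have q33 : z3 3 = 0 := by rw [hz3]; exact br3 x z2 q20 q21 q22
  set z4 : L7 := br x z3 with hz4
  have q40 : z4 0 = 0 := by simp [hz4, br]
  have q41 : z4 1 = 0 := by simp [hz4, br]
  have q42 : z4 2 = 0 := by rw [hz4]; exact br2 x z3 q30 q31
  have q43 : z4 3 = 0 := by rw [hz4]; exact br3 x z3 q30 q31 q32
  have q44 : z4 4 = 0 := by rw [hz4]; exact br4 x z3 q30 q31 q32 q33
  set z5 : L7 := br x z4 with hz5
  have q50 : z5 0 = 0 := by simp [hz5, br]
  have q51 : z5 1 = 0 := by simp [hz5, br]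
  have q52 : z5 2 = 0 := by rw [hz5]; exact br2 x z4 q40 q41
  have q53 : z5 3 = 0 := by rw [hz5]; exact br3 x z4 q40 q41 q42
  have q54 : z5 4 = 0 := by rw [hz5]; exact br4 x z4 q40 q41 q42 q43
  have q55 : z5 5 = 0 := by rw [hz5]; exact br5 x z4 q40 q41 q42 q43 q44
  set z6 : L7 := br x z5 with hz6
  have q60 : z6 0 = 0 := by simp [hz6, br]
  have q61 : z6 1 = 0 := by simp [hz6, br]
  have q62 : z6 2 = 0 := by rw [hz6]; exact br2 x z5 q50 q51
  have q63 : z6 3 = 0 := by rw [hz6]; exact br3 x z5 q50 q51 q52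
  have q64 : z6 4 = 0 := by rw [hz6]; exact br4 x z5 q50 q51 q52 q53
  have q65 : z6 5 = 0 := by rw [hz6]; exact br5 x z5 q50 q51 q52 q53 q54
  have q66 : z6 6 = 0 := by rw [hz6]; exact br6 x z5 q50 q51 q52 q53 q54 q55
  funext k
  rw [zero_apply]
  fin_cases k
  · exact q60
  · exact q61
  · exact q62
  · exact q63
  · exact q64
  · exact q65
  · exact q66

instance : LieRing.IsNilpotent L7 := by
  rw [LieAlgebra.isNilpotent_iff_forall (R := ℂ)]
  intro x
  refine ⟨6, LinearMap.ext fun y => ?_⟩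
  rw [Module.End.pow_apply, LinearMap.zero_apply]
  have ad_eq : ∀ y : L7, LieAlgebra.ad ℂ L7 x y = br x y := fun y => rfl
  simp only [Function.iterate_succ, Function.iterate_zero, Function.comp_apply, id_eq, ad_eq]
  exact br_pow6 x y



lemma der_nilpotent (f : LieDerivation ℂ L7 L7) : IsNilpotent f.toLinearMap := by
  have B01 : (⁅e 0, e 1⁆ : L7) = e 2 := by
    funext k; fin_cases k <;> simp [br, e_apply]
  have E01 := f.apply_lie_eq_add (e 0) (e 1)
  rw [B01] at E01
  have B02 : (⁅e 0, e 2⁆ : L7) = e 3 := by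
    funext k; fin_cases k <;> simp [br, e_apply]
  have E02 := f.apply_lie_eq_add (e 0) (e 2)
  rw [B02] at E02
  have B03 : (⁅e 0, e 3⁆ : L7) = e 4 := by
    funext k; fin_cases k <;> simp [br, e_apply]
  have E03 := f.apply_lie_eq_add (e 0) (e 3)
  rw [B03] at E03
  have B04 : (⁅e 0, e 4⁆ : L7) = e 5 := by
    funext k; fin_cases k <;> simp [br, e_apply]
  have E04 := f.apply_lie_eq_add (e 0) (e 4)
  rw [B04] at E04
  have B05 : (⁅e 0, e 5⁆ : L7) = e 6 := by
    funext k; fin_cases k <;> simp [br, e_apply]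
  have E05 := f.apply_lie_eq_add (e 0) (e 5)
  rw [B05] at E05
  have B06 : (⁅e 0, e 6⁆ : L7) = 0 := by
    funext k; fin_cases k <;> simp [br, e_apply]
  have E06 := f.apply_lie_eq_add (e 0) (e 6)
  rw [B06, map_zero] at E06
  have B12 : (⁅e 1, e 2⁆ : L7) = e 4 + e 5 := by
    funext k; fin_cases k <;> simp [br, e_apply]
  have E12 := f.apply_lie_eq_add (e 1) (e 2)
  rw [B12, map_add] at E12
  have h010 := congrFun E01 (0 : Fin 7)
  simp [lie_def, br, e_apply] at h010
  have h012 := congrFun E01 (2 : Fin 7)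
  simp [lie_def, br, e_apply] at h012
  have h020 := congrFun E02 (0 : Fin 7)
  simp [lie_def, br, e_apply] at h020
  have h021 := congrFun E02 (1 : Fin 7)
  simp [lie_def, br, e_apply] at h021
  have h022 := congrFun E02 (2 : Fin 7)
  simp [lie_def, br, e_apply] at h022
  have h023 := congrFun E02 (3 : Fin 7)
  simp [lie_def, br, e_apply] at h023
  have h024 := congrFun E02 (4 : Fin 7)
  simp [lie_def, br, e_apply] at h024
  have h025 := congrFun E02 (5 : Fin 7)
  simp [lie_def, br, e_apply] at h025
  have h030 := congrFun E03 (0 : Fin 7)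
  simp [lie_def, br, e_apply] at h030
  have h031 := congrFun E03 (1 : Fin 7)
  simp [lie_def, br, e_apply] at h031
  have h032 := congrFun E03 (2 : Fin 7)
  simp [lie_def, br, e_apply] at h032
  have h033 := congrFun E03 (3 : Fin 7)
  simp [lie_def, br, e_apply] at h033
  have h034 := congrFun E03 (4 : Fin 7)
  simp [lie_def, br, e_apply] at h034
  have h035 := congrFun E03 (5 : Fin 7)
  simp [lie_def, br, e_apply] at h035
  have h036 := congrFun E03 (6 : Fin 7)
  simp [lie_def, br, e_apply] at h036
  have h040 := congrFun E04 (0 : Fin 7)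
  simp [lie_def, br, e_apply] at h040
  have h041 := congrFun E04 (1 : Fin 7)
  simp [lie_def, br, e_apply] at h041
  have h042 := congrFun E04 (2 : Fin 7)
  simp [lie_def, br, e_apply] at h042
  have h043 := congrFun E04 (3 : Fin 7)
  simp [lie_def, br, e_apply] at h043
  have h044 := congrFun E04 (4 : Fin 7)
  simp [lie_def, br, e_apply] at h044
  have h045 := congrFun E04 (5 : Fin 7)
  simp [lie_def, br, e_apply] at h045
  have h046 := congrFun E04 (6 : Fin 7)
  simp [lie_def, br, e_apply] at h046
  have h050 := congrFun E05 (0 : Fin 7)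
  simp [lie_def, br, e_apply] at h050
  have h051 := congrFun E05 (1 : Fin 7)
  simp [lie_def, br, e_apply] at h051
  have h052 := congrFun E05 (2 : Fin 7)
  simp [lie_def, br, e_apply] at h052
  have h053 := congrFun E05 (3 : Fin 7)
  simp [lie_def, br, e_apply] at h053
  have h054 := congrFun E05 (4 : Fin 7)
  simp [lie_def, br, e_apply] at h054
  have h055 := congrFun E05 (5 : Fin 7)
  simp [lie_def, br, e_apply] at h055
  have h056 := congrFun E05 (6 : Fin 7)
  simp [lie_def, br, e_apply] at h056
  have h066 := congrFun E06 (6 : Fin 7)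
  simp [lie_def, br, e_apply] at h066
  have h123 := congrFun E12 (3 : Fin 7)
  simp [lie_def, br, e_apply] at h123
  have h124 := congrFun E12 (4 : Fin 7)
  simp [lie_def, br, e_apply] at h124
  have h125 := congrFun E12 (5 : Fin 7)
  simp [lie_def, br, e_apply] at h125
  have h126 := congrFun E12 (6 : Fin 7)
  simp [lie_def, br, e_apply] at h126
  have a00 : f (e 0) 0 = 0 := by linear_combination (-3/5 : ℂ) * h024 + (2/5 : ℂ) * h025 + (-3/5 : ℂ) * h035 + (2/5 : ℂ) * h036 + (-1 : ℂ) * h045 + (2/5 : ℂ) * h046 + (-1 : ℂ) * h055 + (-1 : ℂ) * h066 + (-1 : ℂ) * h124 + (1 : ℂ) * h125 + (-2/5 : ℂ) * h126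
  have a01 : f (e 1) 0 = 0 := by linear_combination (1 : ℂ) * h021 + (1 : ℂ) * h032 + (1 : ℂ) * h043 + (-1 : ℂ) * h044 + (-1 : ℂ) * h055 + (-1 : ℂ) * h066 + (-1 : ℂ) * h123
  have a02 : f (e 2) 0 = 0 := by linear_combination (1 : ℂ) * h010
  have a03 : f (e 3) 0 = 0 := by linear_combination (1 : ℂ) * h020
  have a04 : f (e 4) 0 = 0 := by linear_combination (1 : ℂ) * h030
  have a05 : f (e 5) 0 = 0 := by linear_combination (1 : ℂ) * h040
  have a06 : f (e 6) 0 = 0 := by linear_combination (1 : ℂ) * h050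
  have a11 : f (e 1) 1 = 0 := by linear_combination (1 : ℂ) * h023 + (-6/5 : ℂ) * h024 + (4/5 : ℂ) * h025 + (1 : ℂ) * h034 + (-6/5 : ℂ) * h035 + (4/5 : ℂ) * h036 + (-2 : ℂ) * h045 + (4/5 : ℂ) * h046 + (-3 : ℂ) * h055 + (-3 : ℂ) * h066 + (-3 : ℂ) * h124 + (2 : ℂ) * h125 + (-4/5 : ℂ) * h126
  have a12 : f (e 2) 1 = 0 := by linear_combination (-1 : ℂ) * h022 + (-1 : ℂ) * h033 + (-1 : ℂ) * h044 + (-1 : ℂ) * h055 + (-1 : ℂ) * h066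
  have a13 : f (e 3) 1 = 0 := by linear_combination (1 : ℂ) * h021
  have a14 : f (e 4) 1 = 0 := by linear_combination (1 : ℂ) * h031
  have a15 : f (e 5) 1 = 0 := by linear_combination (1 : ℂ) * h041
  have a16 : f (e 6) 1 = 0 := by linear_combination (1 : ℂ) * h051
  have a22 : f (e 2) 2 = 0 := by linear_combination (1 : ℂ) * h012 + (1 : ℂ) * h023 + (-9/5 : ℂ) * h024 + (6/5 : ℂ) * h025 + (1 : ℂ) * h034 + (-9/5 : ℂ) * h035 + (6/5 : ℂ) * h036 + (-3 : ℂ) * h045 + (6/5 : ℂ) * h046 + (-4 : ℂ) * h055 + (-4 : ℂ) * h066 + (-4 : ℂ) * h124 + (3 : ℂ) * h125 + (-6/5 : ℂ) * h126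
  have a23 : f (e 3) 2 = 0 := by linear_combination (-1 : ℂ) * h033 + (-1 : ℂ) * h044 + (-1 : ℂ) * h055 + (-1 : ℂ) * h066
  have a24 : f (e 4) 2 = 0 := by linear_combination (1 : ℂ) * h021 + (1 : ℂ) * h032
  have a25 : f (e 5) 2 = 0 := by linear_combination (1 : ℂ) * h031 + (1 : ℂ) * h042
  have a26 : f (e 6) 2 = 0 := by linear_combination (1 : ℂ) * h041 + (1 : ℂ) * h052
  have a33 : f (e 3) 3 = 0 := by linear_combination (1 : ℂ) * h012 + (2 : ℂ) * h023 + (-12/5 : ℂ) * h024 + (8/5 : ℂ) * h025 + (1 : ℂ) * h034 + (-12/5 : ℂ) * h035 + (8/5 : ℂ) * h036 + (-4 : ℂ) * h045 + (8/5 : ℂ) * h046 + (-5 : ℂ) * h055 + (-5 : ℂ) * h066 + (-5 : ℂ) * h124 + (4 : ℂ) * h125 + (-8/5 : ℂ) * h126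
  have a34 : f (e 4) 3 = 0 := by linear_combination (-1 : ℂ) * h044 + (-1 : ℂ) * h055 + (-1 : ℂ) * h066
  have a35 : f (e 5) 3 = 0 := by linear_combination (1 : ℂ) * h021 + (1 : ℂ) * h032 + (1 : ℂ) * h043
  have a36 : f (e 6) 3 = 0 := by linear_combination (1 : ℂ) * h031 + (1 : ℂ) * h042 + (1 : ℂ) * h053
  have a44 : f (e 4) 4 = 0 := by linear_combination (1 : ℂ) * h012 + (2 : ℂ) * h023 + (-3 : ℂ) * h024 + (2 : ℂ) * h025 + (2 : ℂ) * h034 + (-3 : ℂ) * h035 + (2 : ℂ) * h036 + (-5 : ℂ) * h045 + (2 : ℂ) * h046 + (-6 : ℂ) * h055 + (-6 : ℂ) * h066 + (-6 : ℂ) * h124 + (5 : ℂ) * h125 + (-2 : ℂ) * h126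
  have a45 : f (e 5) 4 = 0 := by linear_combination (-1 : ℂ) * h055 + (-1 : ℂ) * h066
  have a46 : f (e 6) 4 = 0 := by linear_combination (1 : ℂ) * h021 + (1 : ℂ) * h032 + (1 : ℂ) * h043 + (1 : ℂ) * h054
  have a55 : f (e 5) 5 = 0 := by linear_combination (1 : ℂ) * h012 + (2 : ℂ) * h023 + (-18/5 : ℂ) * h024 + (12/5 : ℂ) * h025 + (2 : ℂ) * h034 + (-18/5 : ℂ) * h035 + (12/5 : ℂ) * h036 + (-5 : ℂ) * h045 + (12/5 : ℂ) * h046 + (-7 : ℂ) * h055 + (-7 : ℂ) * h066 + (-7 : ℂ) * h124 + (6 : ℂ) * h125 + (-12/5 : ℂ) * h126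
  have a56 : f (e 6) 5 = 0 := by linear_combination (-1 : ℂ) * h066
  have a66 : f (e 6) 6 = 0 := by linear_combination (1 : ℂ) * h012 + (2 : ℂ) * h023 + (-21/5 : ℂ) * h024 + (14/5 : ℂ) * h025 + (2 : ℂ) * h034 + (-21/5 : ℂ) * h035 + (14/5 : ℂ) * h036 + (-6 : ℂ) * h045 + (14/5 : ℂ) * h046 + (-8 : ℂ) * h055 + (1 : ℂ) * h056 + (-8 : ℂ) * h066 + (-8 : ℂ) * h124 + (7 : ℂ) * h125 + (-14/5 : ℂ) * h126
  have tri : ∀ k t : Fin 7, k ≤ t → f (e t) k = 0 := by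
    intro k t
    fin_cases k <;> fin_cases t <;> intro h <;>
      first | exact a00 | exact a01 | exact a02 | exact a03 | exact a04 | exact a05 | exact a06 | exact a11 | exact a12 | exact a13 | exact a14 | exact a15 | exact a16 | exact a22 | exact a23 | exact a24 | exact a25 | exact a26 | exact a33 | exact a34 | exact a35 | exact a36 | exact a44 | exact a45 | exact a46 | exact a55 | exact a56 | exact a66 | exact absurd h (by decide)
  have rep : ∀ y : L7, f y = y 0 • f (e 0) + y 1 • f (e 1) + y 2 • f (e 2) + y 3 • f (e 3)
      + y 4 • f (e 4) + y 5 • f (e 5) + y 6 • f (e 6) := by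
    intro y
    have hy : y = y 0 • e 0 + y 1 • e 1 + y 2 • e 2 + y 3 • e 3 + y 4 • e 4 + y 5 • e 5
        + y 6 • e 6 := by
      funext k; fin_cases k <;> simp [e_apply]
    conv_lhs => rw [hy]
    simp only [map_add, map_smul]
  have fz : ∀ (y : L7) (k : Fin 7), (∀ t : Fin 7, t < k → y t = 0) → f y k = 0 := by
    intro y k hy
    have term : ∀ t : Fin 7, y t * f (e t) k = 0 := by
      intro t
      rcases lt_or_ge t k with h | h
      · rw [hy t h, zero_mul]
      · rw [tri k t h, mul_zero]
    calc f y k = y 0 * f (e 0) k + y 1 * f (e 1) k + y 2 * f (e 2) k + y 3 * f (e 3) k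
        + y 4 * f (e 4) k + y 5 * f (e 5) k + y 6 * f (e 6) k := by
          rw [rep y]; simp only [add_apply, smul_apply]
      _ = 0 := by rw [term 0, term 1, term 2, term 3, term 4, term 5, term 6]; ring
  have fz' : ∀ (m : ℕ) (y : L7), (∀ t : Fin 7, (t : ℕ) < m → y t = 0) →
      ∀ k : Fin 7, (k : ℕ) < m + 1 → f y k = 0 := by
    intro m y hy k _
    refine fz y k fun t ht => hy t ?_
    have h1 := Fin.lt_def.mp ht
    have h2 : (k : ℕ) < m + 1 := by assumption
    omega
  refine ⟨7, LinearMap.ext fun y => ?_⟩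
  rw [Module.End.pow_apply, LinearMap.zero_apply]
  simp only [Function.iterate_succ, Function.iterate_zero, Function.comp_apply, id_eq,
    LieDerivation.coeFn_coe]
  have h0 : ∀ t : Fin 7, (t : ℕ) < 0 → y t = 0 := fun t ht => absurd ht (by omega)
  have h1 := fz' 0 y h0
  have h2 := fz' 1 (f y) h1
  have h3 := fz' 2 _ h2
  have h4 := fz' 3 _ h3
  have h5 := fz' 4 _ h4
  have h6 := fz' 5 _ h5
  have h7 := fz' 6 _ h6
  funext k
  rw [zero_apply]
  exact h7 k k.isLt

end L7

/-- There exists a 7-dimensional complex nilpotent Lie algebra all of whose derivations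
are nilpotent linear endomorphisms (i.e. a characteristically nilpotent Lie algebra). -/
theorem stmt_2 :
    ∃ (L : Type) (_ : LieRing L) (_ : LieAlgebra ℂ L) (_ : Module.Finite ℂ L),
      Module.finrank ℂ L = 7 ∧ LieRing.IsNilpotent L ∧
      ∀ f : LieDerivation ℂ L L, IsNilpotent f.toLinearMap := by
  exact ⟨L7, inferInstance, inferInstance, inferInstance, L7.finrank_eq, inferInstance,
    L7.der_nilpotent⟩
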